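/- Let q be a prime power, t a fixed positive integer, and 0 < δ ≤ 1. Then the asymptotic metric α_q^{(t)}(δ) = limsup_{n→∞} max{ (dim C1)/n : there exist nested linear codes C2 ⊆ C1 ⊆ F_q^n with dim C1 − dim C2 ≥ t and M_t(C1, C2)/n ≥ δ } satisfies α_q^{(t)}(δ) = 1 − δ. -/

import Mathlib

/-- `V_I = {x ∈ F^n : i ∉ I → x i = 0}` -/
noncomputable def VI (F : Type) [Field F] (n : ℕ) (I : Finset (Fin n)) :
    Submodule F (Fin n → F) :=
  Submodule.pi (↑I)ᶜ (fun _ => (⊥ : Submodule F F))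

/-- the `t`-th relative generalized Hamming weight of `C₂ ⊆ C₁ ⊆ F^n` -/
noncomputable def RGHW (F : Type) [Field F] {n : ℕ} (t : ℕ)
    (C₁ C₂ : Submodule F (Fin n → F)) : ℕ :=
  sInf {d : ℕ | ∃ I : Finset (Fin n), I.card = d ∧
    Module.finrank F ↥(C₁ ⊓ VI F n I) ≥ Module.finrank F ↥(C₂ ⊓ VI F n I) + t}

/-- `π(q) = ∏_{i=1}^∞ (1 - q^{-i})` -/
noncomputable def piq (q : ℝ) : ℝ := ∏' i : ℕ, (1 - (q ^ (i + 1))⁻¹)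

/-- `N₁(w,u) = ∏_{i=0}^{u-1}(q^w - q^i) / ∏_{i=0}^{u-1}(q^u - q^i)` -/
noncomputable def N1 (q : ℝ) (w u : ℕ) : ℝ :=
  (∏ i ∈ Finset.range u, (q ^ w - q ^ i)) / (∏ i ∈ Finset.range u, (q ^ u - q ^ i))

/-- `N₂(w,u,v) = ∏_{i=0}^{v-1}(q^w - q^{u+i}) / ∏_{i=0}^{v-1}(q^v - q^i)` -/
noncomputable def N2 (q : ℝ) (w u v : ℕ) : ℝ :=
  (∏ i ∈ Finset.range v, (q ^ w - q ^ (u + i))) / (∏ i ∈ Finset.range v, (q ^ v - q ^ i))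

/-- `N₃(w,u,v,a) = N₁(u,a) · N₂(w-a, u-a, v-a)` -/
noncomputable def N3 (q : ℝ) (w u v a : ℕ) : ℝ :=
  N1 q u a * N2 q (w - a) (u - a) (v - a)


/-!
Upper bound: a set `E` of at most `dim C₂` coordinates with `C₂ ∩ V_{Eᶜ} = 0` (an information
set, found by induction on `dim C₂`) can be enlarged to `dim C₁ - t` coordinates; its complement
`I` has `C₂ ∩ V_I = 0` and `dim (C₁ ∩ V_I) ≥ t`, which gives the Singleton-type bound
`M_t(C₁, C₂) ≤ n - dim C₁ + t`. Hence every admissible rate is at most `1 - δ + t / n`.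

Lower bound: for `m = ⌈δ n⌉` let `C₂ = V_J` with `|J| = n - m` and `C₁ = V_{J'} + ⟨𝟙⟩` with
`J ⊆ J'`, `|J'| = n - m + t - 1`, so that `dim C₁ / C₂ = t`. If `I` realises the gap `t`, then
`C₁ ⊆ C₂ + V_I ⊆ V_{J ∪ I}`, and the all-one word forces `|I| ≥ m`. This pair has rate
`(n - m + t) / n ≥ 1 - δ`, and the two bounds squeeze the maximal rate to `1 - δ`.
-/

open Module Finset Filter Topology

section Subspace

variable {K V : Type*} [DivisionRing K] [AddCommGroup V] [Module K V] [FiniteDimensional K V]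

lemma finrank_add_finrank_le_finrank_inf_add (C W : Submodule K V) :
    finrank K C + finrank K W ≤ finrank K ↥(C ⊓ W) + finrank K V := by
  rw [← Submodule.finrank_sup_add_finrank_inf_eq, add_comm]
  exact Nat.add_le_add_left (Submodule.finrank_le _) _

lemma le_sup_of_finrank_add_le {C₁ C₂ : Submodule K V} (W : Submodule K V) (h : C₂ ≤ C₁)
    (hW : finrank K C₁ + finrank K ↥(C₂ ⊓ W) ≤ finrank K C₂ + finrank K ↥(C₁ ⊓ W)) :
    C₁ ≤ C₂ ⊔ W := by
  have hinf : C₂ ⊓ (C₁ ⊓ W) = C₂ ⊓ W := by rw [← inf_assoc, inf_eq_left.2 h]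
  have hrank := Submodule.finrank_sup_add_finrank_inf_eq C₂ (C₁ ⊓ W)
  rw [hinf] at hrank
  have heq : C₂ ⊔ C₁ ⊓ W = C₁ :=
    Submodule.eq_of_le_of_finrank_le (sup_le h inf_le_left) (by omega)
  exact heq ▸ sup_le_sup_left inf_le_right _

end Subspace

section Codes

variable {F : Type} [Field F] {n : ℕ}

lemma mem_VI {I : Finset (Fin n)} {x : Fin n → F} : x ∈ VI F n I ↔ ∀ i ∉ I, x i = 0 := by
  simp [VI, Submodule.mem_pi]

lemma VI_mono {I J : Finset (Fin n)} (h : I ⊆ J) : VI F n I ≤ VI F n J := fun _ hx =>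
  mem_VI.2 fun i hi => mem_VI.1 hx i fun hiI => hi (h hiI)

lemma VI_univ : VI F n univ = ⊤ := by
  ext x; simp [mem_VI]

lemma VI_sup_le (I J : Finset (Fin n)) : VI F n I ⊔ VI F n J ≤ VI F n (I ∪ J) :=
  sup_le (VI_mono subset_union_left) (VI_mono subset_union_right)

lemma finrank_VI (I : Finset (Fin n)) : finrank F (VI F n I) = #I := by
  classical
  have hVI : VI F n I = ⨅ i ∈ (↑I : Set (Fin n))ᶜ, LinearMap.ker (LinearMap.proj i) := by
    ext x; simp [mem_VI]
  rw [hVI, (LinearMap.iInfKerProjEquiv F (fun _ : Fin n => F) disjoint_compl_right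
    (by simp)).finrank_eq]
  simp

lemma finrank_le_finrank_inf_VI_add (C : Submodule F (Fin n → F)) (I : Finset (Fin n)) :
    finrank F C ≤ finrank F ↥(C ⊓ VI F n I) + #Iᶜ := by
  have := finrank_add_finrank_le_finrank_inf_add C (VI F n I)
  rw [finrank_VI, finrank_fin_fun] at this
  rw [card_compl, Fintype.card_fin]
  omega

lemma exists_card_le_finrank_inf_VI_compl_eq_bot (C : Submodule F (Fin n → F)) :
    ∃ E : Finset (Fin n), #E ≤ finrank F C ∧ C ⊓ VI F n Eᶜ = ⊥ := by
  classical
  induction hC : finrank F C using Nat.strong_induction_on generalizing C with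
  | _ k ih =>
  by_cases hbot : C = ⊥
  · exact ⟨∅, by simp, by simp [hbot]⟩
  obtain ⟨x, hxC, hx0⟩ := Submodule.exists_mem_ne_zero_of_ne_bot hbot
  obtain ⟨i, hi⟩ := Function.ne_iff.1 hx0
  have hlt : C ⊓ VI F n {i}ᶜ < C := by
    refine inf_le_left.lt_of_ne fun h => hi ?_
    rw [← h] at hxC
    exact mem_VI.1 (Submodule.mem_inf.1 hxC).2 i (by simp)
  have hrank := Submodule.finrank_lt_finrank_of_lt hlt
  obtain ⟨E, hE, hEC⟩ := ih _ (hC ▸ hrank) _ rfl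
  refine ⟨insert i E, (card_insert_le _ _).trans (by omega), eq_bot_iff.2 ?_⟩
  rw [← hEC]
  refine le_inf (le_inf inf_le_left (inf_le_right.trans (VI_mono ?_)))
    (inf_le_right.trans (VI_mono ?_))
  · simp
  · exact compl_subset_compl.2 (subset_insert _ _)

lemma RGHW_le_card {t : ℕ} {C₁ C₂ : Submodule F (Fin n → F)} (I : Finset (Fin n))
    (h : finrank F ↥(C₂ ⊓ VI F n I) + t ≤ finrank F ↥(C₁ ⊓ VI F n I)) :
    RGHW F t C₁ C₂ ≤ #I :=
  Nat.sInf_le ⟨I, rfl, h⟩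

lemma le_RGHW {t m : ℕ} {C₁ C₂ : Submodule F (Fin n → F)}
    (h : finrank F C₂ + t ≤ finrank F C₁)
    (hm : ∀ I : Finset (Fin n),
      finrank F ↥(C₂ ⊓ VI F n I) + t ≤ finrank F ↥(C₁ ⊓ VI F n I) → m ≤ #I) :
    m ≤ RGHW F t C₁ C₂ :=
  le_csInf ⟨n, univ, by simp, by rwa [VI_univ, inf_top_eq, inf_top_eq]⟩
    fun _ ⟨I, hI, hIt⟩ => hI ▸ hm I hIt

lemma finrank_submodule_fin_fun_le (C : Submodule F (Fin n → F)) : finrank F C ≤ n := by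
  simpa using Submodule.finrank_le C

lemma RGHW_add_finrank_le {t : ℕ} {C₁ C₂ : Submodule F (Fin n → F)}
    (h : finrank F C₂ + t ≤ finrank F C₁) : RGHW F t C₁ C₂ + finrank F C₁ ≤ n + t := by
  obtain ⟨E, hE, hEC⟩ := exists_card_le_finrank_inf_VI_compl_eq_bot C₂
  have hC₁ := finrank_submodule_fin_fun_le C₁
  obtain ⟨I, hIE, hI⟩ := exists_subset_card_eq (s := Eᶜ) (n := n + t - finrank F C₁)
    (by rw [card_compl, Fintype.card_fin]; omega)
  have hbot : C₂ ⊓ VI F n I = ⊥ := eq_bot_iff.2 (hEC ▸ inf_le_inf_left _ (VI_mono hIE))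
  have hC₁I := finrank_le_finrank_inf_VI_add C₁ I
  rw [card_compl, Fintype.card_fin, hI] at hC₁I
  have : RGHW F t C₁ C₂ ≤ #I := RGHW_le_card I (by rw [hbot, finrank_bot]; omega)
  omega

lemma card_compl_le_RGHW {t : ℕ} {J : Finset (Fin n)} {C₁ : Submodule F (Fin n → F)}
    (hJ : VI F n J ≤ C₁) (hC₁ : finrank F C₁ = #J + t) (h1 : (1 : Fin n → F) ∈ C₁) :
    #Jᶜ ≤ RGHW F t C₁ (VI F n J) := by
  refine le_RGHW (by rw [finrank_VI, hC₁]) fun I hI => card_le_card fun i hi => ?_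
  have hle := le_sup_of_finrank_add_le (VI F n I) hJ (by rw [finrank_VI, hC₁]; omega)
  by_contra hiI
  exact one_ne_zero (mem_VI.1 (VI_sup_le J I (hle h1)) i (by simp_all))

lemma exists_le_RGHW {t m : ℕ} (ht : 1 ≤ t) (htm : t ≤ m) (hmn : m ≤ n) :
    ∃ C₁ C₂ : Submodule F (Fin n → F), C₂ ≤ C₁ ∧ finrank F C₂ + m = n ∧
      finrank F C₁ = finrank F C₂ + t ∧ m ≤ RGHW F t C₁ C₂ := by
  obtain ⟨J', -, hJ'⟩ := exists_subset_card_eq (s := (univ : Finset (Fin n)))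
    (n := n - m + (t - 1)) (by simp; omega)
  obtain ⟨J, hJJ', hJ⟩ := exists_subset_card_eq (s := J') (n := n - m) (by omega)
  obtain ⟨i, -, hi⟩ := exists_mem_notMem_of_card_lt_card (s := J') (t := univ) (by simp; omega)
  have h1 : (1 : Fin n → F) ∉ VI F n J' := fun h => one_ne_zero (mem_VI.1 h i hi)
  set C₁ := VI F n J' ⊔ Submodule.span F {1}
  have hC₁ : finrank F C₁ = #J + t := by
    rw [Submodule.finrank_sup_span_singleton h1, finrank_VI]; omega
  have hJC₁ : VI F n J ≤ C₁ := (VI_mono hJJ').trans le_sup_left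
  refine ⟨C₁, VI F n J, hJC₁, by rw [finrank_VI]; omega, by rw [finrank_VI, hC₁], ?_⟩
  have := card_compl_le_RGHW hJC₁ hC₁
    (Submodule.mem_sup_right (Submodule.mem_span_singleton_self 1))
  rw [card_compl, Fintype.card_fin] at this
  omega

end Codes

section Rates

def rates (F : Type) [Field F] (t : ℕ) (δ : ℝ) (n : ℕ) : Set ℝ :=
  {r : ℝ | ∃ C₁ C₂ : Submodule F (Fin n → F), C₂ ≤ C₁ ∧
    finrank F C₁ - finrank F C₂ ≥ t ∧ (RGHW F t C₁ C₂ : ℝ) / n ≥ δ ∧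
    r = (finrank F C₁ : ℝ) / n}

variable {F : Type} [Field F] {t : ℕ} {δ : ℝ} {n : ℕ}

lemma bddAbove_rates : BddAbove (rates F t δ n) := by
  refine ⟨1, ?_⟩
  rintro _ ⟨C₁, -, -, -, -, rfl⟩
  exact div_le_one_of_le₀ (by exact_mod_cast finrank_submodule_fin_fun_le C₁) n.cast_nonneg

lemma sSup_rates_le (hδ1 : δ ≤ 1) (hn : 0 < n) : sSup (rates F t δ n) ≤ 1 - δ + t / n := by
  have hn' : (0 : ℝ) < n := by exact_mod_cast hn
  refine Real.sSup_le ?_ (add_nonneg (sub_nonneg.2 hδ1) (by positivity))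
  rintro _ ⟨C₁, C₂, h12, hgap, hδ, rfl⟩
  have hgap' : finrank F C₂ + t ≤ finrank F C₁ := by
    have := Submodule.finrank_mono h12
    omega
  have hS : (RGHW F t C₁ C₂ : ℝ) + finrank F C₁ ≤ n + t := by
    exact_mod_cast RGHW_add_finrank_le hgap'
  rw [ge_iff_le, le_div_iff₀ hn'] at hδ
  rw [div_le_iff₀ hn', add_mul, div_mul_cancel₀ _ hn'.ne']
  linarith

lemma one_sub_le_sSup_rates (ht : 1 ≤ t) (hδ1 : δ ≤ 1) (htn : t ≤ δ * n) :
    1 - δ ≤ sSup (rates F t δ n) := by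
  set m := ⌈δ * n⌉₊
  have htm : t ≤ m := by exact_mod_cast htn.trans (Nat.le_ceil _)
  have hmn : m ≤ n := Nat.ceil_le.2 (mul_le_of_le_one_left n.cast_nonneg hδ1)
  have hn : (0 : ℝ) < n := by exact_mod_cast (by omega : 0 < n)
  obtain ⟨C₁, C₂, h12, hC₂, hC₁, hm⟩ := exists_le_RGHW (F := F) ht htm hmn
  refine le_csSup_of_le bddAbove_rates ⟨C₁, C₂, h12, by omega, ?_, rfl⟩ ?_
  · rw [ge_iff_le, le_div_iff₀ hn]
    exact (Nat.le_ceil _).trans (by exact_mod_cast hm)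
  · have hm' : (m : ℝ) < δ * n + 1 := Nat.ceil_lt_add_one ((Nat.cast_nonneg t).trans htn)
    have hsum : (finrank F C₁ : ℝ) + m = n + t := by
      exact_mod_cast (by omega : finrank F C₁ + m = n + t)
    have ht' : (1 : ℝ) ≤ t := by exact_mod_cast ht
    rw [le_div_iff₀ hn]
    linarith

end Rates

theorem alpha_eq_general (F : Type) [Field F] (t : ℕ) (ht : 1 ≤ t)
    (δ : ℝ) (hδ0 : 0 < δ) (hδ1 : δ ≤ 1) :
    Filter.limsup (fun n : ℕ =>
        sSup {r : ℝ | ∃ C₁ C₂ : Submodule F (Fin n → F), C₂ ≤ C₁ ∧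
          Module.finrank F C₁ - Module.finrank F C₂ ≥ t ∧
          (RGHW F t C₁ C₂ : ℝ) / n ≥ δ ∧
          r = (Module.finrank F C₁ : ℝ) / n})
      Filter.atTop = 1 - δ := by
  change limsup (fun n => sSup (rates F t δ n)) atTop = 1 - δ
  have hupper : Tendsto (fun n : ℕ => 1 - δ + t / n) atTop (𝓝 (1 - δ)) := by
    simpa using tendsto_const_nhds.add (tendsto_const_div_atTop_nhds_zero_nat (t : ℝ))
  have hlower : ∀ᶠ n : ℕ in atTop, 1 - δ ≤ sSup (rates F t δ n) :=
    ((tendsto_natCast_atTop_atTop.const_mul_atTop hδ0).eventually_ge_atTop (t : ℝ)).mono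
      fun _ hn => one_sub_le_sSup_rates ht hδ1 hn
  have hle : ∀ᶠ n : ℕ in atTop, sSup (rates F t δ n) ≤ 1 - δ + t / n :=
    (eventually_gt_atTop 0).mono fun _ hn => sSup_rates_le hδ1 hn
  exact (tendsto_of_tendsto_of_tendsto_of_le_of_le' tendsto_const_nhds hupper hlower hle).limsup_eq

/-- Theorem 2: the asymptotic metric of Zhuang et al. equals `1 - δ`. -/
theorem alpha_eq (F : Type) [Field F] [Fintype F] (t : ℕ) (ht : 1 ≤ t)
    (δ : ℝ) (hδ0 : 0 < δ) (hδ1 : δ ≤ 1) :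
    Filter.limsup (fun n : ℕ =>
        sSup {r : ℝ | ∃ C₁ C₂ : Submodule F (Fin n → F), C₂ ≤ C₁ ∧
          Module.finrank F C₁ - Module.finrank F C₂ ≥ t ∧
          (RGHW F t C₁ C₂ : ℝ) / n ≥ δ ∧
          r = (Module.finrank F C₁ : ℝ) / n})
      Filter.atTop = 1 - δ :=
  alpha_eq_general F t ht δ hδ0 hδ1
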